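/- arXiv:1006.2665 — 6 statements merged into one kernel-verified Lean document; each statement's English description precedes it below -/
import Mathlib

section
/- Let X and Y be real Banach spaces and let Q : Y → X be a bounded linear surjection. Then there exists a constant C ≥ 1 such that for every δ ≥ 1 and every finite sequence (x_0, …, x_k) in X which is δ-equivalent to the unit vector basis of ℓ₁, there exist vectors y_0, …, y_k in Y with Q(y_n) = x_n for every n ∈ {0, …, k} and such that (y_0, …, y_k) is Cδ-equivalent to the unit vector basis of ℓ₁. -/
/-- If `Q : Y → X` is a bounded linear surjection between real
Banach spaces, then there is `C ≥ 1` such that every finite sequence in `X`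
which is `δ`-equivalent to the unit vector basis of `ℓ₁` lifts through `Q` to a
finite sequence in `Y` which is `Cδ`-equivalent to the unit vector basis of `ℓ₁`. -/
theorem stmt_1 {X Y : Type*}
    [NormedAddCommGroup X] [NormedSpace ℝ X] [CompleteSpace X]
    [NormedAddCommGroup Y] [NormedSpace ℝ Y] [CompleteSpace Y]
    (Q : Y →L[ℝ] X) (hQ : Function.Surjective Q) :
    ∃ C : ℝ, 1 ≤ C ∧
      ∀ δ : ℝ, 1 ≤ δ → ∀ (k : ℕ) (x : Fin (k + 1) → X),
        (∀ a : Fin (k + 1) → ℝ,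
          δ⁻¹ * ∑ n, |a n| ≤ ‖∑ n, a n • x n‖ ∧
          ‖∑ n, a n • x n‖ ≤ δ * ∑ n, |a n|) →
        ∃ y : Fin (k + 1) → Y, (∀ n, Q (y n) = x n) ∧
          ∀ a : Fin (k + 1) → ℝ,
            (C * δ)⁻¹ * ∑ n, |a n| ≤ ‖∑ n, a n • y n‖ ∧
            ‖∑ n, a n • y n‖ ≤ (C * δ) * ∑ n, |a n| := by
  obtain ⟨M, hM0, hM⟩ := Q.exists_preimage_norm_le hQ
  refine ⟨max 1 (max M ‖Q‖), le_max_left _ _, ?_⟩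
  set C := max 1 (max M ‖Q‖) with hC
  have hC1 : (1:ℝ) ≤ C := le_max_left _ _
  have hCpos : (0:ℝ) < C := lt_of_lt_of_le one_pos hC1
  have hMC : M ≤ C := le_trans (le_max_left M ‖Q‖) (le_max_right _ _)
  have hQC : ‖Q‖ ≤ C := le_trans (le_max_right M ‖Q‖) (le_max_right _ _)
  intro δ hδ k x hx
  have hδpos : (0:ℝ) < δ := lt_of_lt_of_le one_pos hδ
  choose y hy hny using fun n => hM (x n)
  refine ⟨y, hy, fun a => ?_⟩
  have hQsum : Q (∑ n, a n • y n) = ∑ n, a n • x n := by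
    rw [map_sum]
    simp [hy]
  have hxn : ∀ n, ‖x n‖ ≤ δ := by
    intro n
    have := (hx (Pi.single n 1)).2
    simpa [Pi.single_apply, apply_ite abs, Finset.sum_ite_eq'] using this
  constructor
  · have h1 : δ⁻¹ * ∑ n, |a n| ≤ ‖∑ n, a n • x n‖ := (hx a).1
    have h2 : ‖∑ n, a n • x n‖ ≤ C * ‖∑ n, a n • y n‖ := by
      calc ‖∑ n, a n • x n‖ = ‖Q (∑ n, a n • y n)‖ := by rw [hQsum]
        _ ≤ ‖Q‖ * ‖∑ n, a n • y n‖ := Q.le_opNorm _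
        _ ≤ C * ‖∑ n, a n • y n‖ := by gcongr
    have h3 : δ⁻¹ * ∑ n, |a n| ≤ C * ‖∑ n, a n • y n‖ := h1.trans h2
    have hS : (0:ℝ) ≤ ∑ n, |a n| := Finset.sum_nonneg fun n _ => abs_nonneg _
    rw [mul_inv]
    calc C⁻¹ * δ⁻¹ * ∑ n, |a n| = C⁻¹ * (δ⁻¹ * ∑ n, |a n|) := by ring
      _ ≤ C⁻¹ * (C * ‖∑ n, a n • y n‖) := by
          gcongr
      _ = ‖∑ n, a n • y n‖ := by field_simp
  · calc ‖∑ n, a n • y n‖ ≤ ∑ n, ‖a n • y n‖ := norm_sum_le _ _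
      _ ≤ ∑ n, |a n| * (C * δ) := by
          refine Finset.sum_le_sum fun n _ => ?_
          rw [norm_smul, Real.norm_eq_abs]
          have hyn : ‖y n‖ ≤ C * δ := by
            calc ‖y n‖ ≤ M * ‖x n‖ := hny n
              _ ≤ C * δ := by
                  have := hxn n
                  nlinarith [norm_nonneg (x n)]
          exact mul_le_mul_of_nonneg_left hyn (abs_nonneg _)
      _ = (C * δ) * ∑ n, |a n| := by rw [← Finset.sum_mul]; ring
end

section
/- Let (v_k)_{k∈ℕ} be a block sequence of (e_n) which is semi-normalized, i.e. there exist constants 0 < c ≤ C with c ≤ ‖v_k‖_E ≤ C for every k, and which satisfies ‖Q_X(v_k)‖_X ≤ 2^{-k} for every k ∈ ℕ. Then (v_k) is equivalent to the standard unit vector basis of c₀ (with respect to the norm ‖·‖_E). -/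
/-!
Write `S_m z = ∑_{n < m} z n • x n`, so that `‖z‖_E = sup_m ‖S_m z‖` and `S_m z = Q z` once `m`
exceeds the support of `z`. A cut at `m` splits at most one block `v K`: the blocks before it are
complete and contribute `a k • Q (v k)`, of norm at most `|a k| 2⁻ᵏ`, and the blocks after it
contribute nothing. Hence `‖S_m (∑ a k • v k)‖ ≤ (C + 2) max |a k|`.

For the lower bound take `K` with `|a K|` maximal and two cuts `q`, `r` that both split only
`v K`, with `S_q (v K) = 0` and `‖S_r (v K)‖ > c / 2`. The other blocks cancel in
`S_r z - S_q z = a K • S_r (v K)`, so `|a K| c / 2 ≤ 2 ‖z‖_E`.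
-/

open Finset

section BlockSequence

variable {R : Type*} [Zero R]

structure IsBlockSequence (v : ℕ → ℕ →₀ R) : Prop where
  ne_zero : ∀ k, v k ≠ 0
  lt_of_mem_support_succ : ∀ k, ∀ i ∈ (v k).support, ∀ j ∈ (v (k + 1)).support, i < j

/-- Cutting a combination of the blocks after its first `m` coordinates splits at most `v K`. -/
def Straddles (v : ℕ → ℕ →₀ R) (K m : ℕ) : Prop :=
  (∀ k < K, ∀ n ∈ (v k).support, n < m) ∧ ∀ k, K < k → ∀ n ∈ (v k).support, m ≤ n

namespace IsBlockSequence

variable {v : ℕ → ℕ →₀ R}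

theorem support_nonempty (hv : IsBlockSequence v) (k : ℕ) : (v k).support.Nonempty :=
  Finsupp.support_nonempty_iff.2 (hv.ne_zero k)

theorem lt_of_mem_support (hv : IsBlockSequence v) {k l : ℕ} (hkl : k < l) {i j : ℕ}
    (hi : i ∈ (v k).support) (hj : j ∈ (v l).support) : i < j := by
  induction l generalizing j with
  | zero => exact absurd hkl (Nat.not_lt_zero k)
  | succ l ih =>
    rcases Nat.lt_succ_iff_lt_or_eq.1 hkl with hkl | rfl
    · obtain ⟨p, hp⟩ := hv.support_nonempty l
      exact (ih hkl hp).trans (hv.lt_of_mem_support_succ l p hp j hj)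
    · exact hv.lt_of_mem_support_succ k i hi j hj

theorem le_of_mem_support (hv : IsBlockSequence v) {k n : ℕ} (hn : n ∈ (v k).support) : k ≤ n := by
  induction k generalizing n with
  | zero => exact Nat.zero_le n
  | succ k ih =>
    obtain ⟨p, hp⟩ := hv.support_nonempty k
    exact (ih hp).trans_lt (hv.lt_of_mem_support_succ k p hp n hn)

theorem exists_straddles (hv : IsBlockSequence v) (m : ℕ) : ∃ K, Straddles v K m := by
  classical
  have h : ∃ K, ∃ n ∈ (v K).support, m ≤ n := by
    obtain ⟨n, hn⟩ := hv.support_nonempty m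
    exact ⟨m, n, hn, hv.le_of_mem_support hn⟩
  obtain ⟨n₀, hn₀, hmn₀⟩ := Nat.find_spec h
  refine ⟨Nat.find h, fun k hk n hn => ?_, fun k hk n hn => hmn₀.trans (hv.lt_of_mem_support hk hn₀ hn).le⟩
  by_contra! hmn
  exact Nat.find_min h hk ⟨n, hn, hmn⟩

theorem straddles_of_mem_support (hv : IsBlockSequence v) {K m i i' : ℕ}
    (hi : i ∈ (v K).support) (him : i ≤ m)
    (hi' : i' ∈ (v K).support) (hmi' : m ≤ i' + 1) : Straddles v K m :=
  ⟨fun _ hk _ hn => (hv.lt_of_mem_support hk hn hi).trans_le him,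
    fun _ hk _ hn => hmi'.trans (hv.lt_of_mem_support hk hi' hn)⟩

end IsBlockSequence

end BlockSequence

section PartialSum

variable (R : Type*) {M : Type*} [Semiring R] [AddCommMonoid M] [Module R M]

/-- `∑ n < m, z n • x n`: the bound is exclusive, so `partialSum R x 0 = 0`. -/
noncomputable def partialSum (x : ℕ → M) (m : ℕ) : (ℕ →₀ R) →ₗ[R] M :=
  Finsupp.linearCombination R fun n => if n < m then x n else 0

variable {R} {x : ℕ → M} {z : ℕ →₀ R} {m m' : ℕ}

theorem partialSum_apply_eq_sum_range (m : ℕ) (z : ℕ →₀ R) :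
    partialSum R x m z = ∑ n ∈ range m, z n • x n := by
  have hzero : ∀ n ∈ z.support ∪ range m, n ∉ range m →
      z n • (if n < m then x n else 0) = 0 := fun n _ hn => by
    simp [mem_range.not.1 hn]
  calc partialSum R x m z = ∑ n ∈ z.support ∪ range m, z n • (if n < m then x n else 0) :=
        Finsupp.sum_of_support_subset z subset_union_left _ fun _ _ => zero_smul R _
    _ = ∑ n ∈ range m, z n • (if n < m then x n else 0) :=
        (sum_subset subset_union_right hzero).symm
    _ = ∑ n ∈ range m, z n • x n := sum_congr rfl fun n hn => by simp [mem_range.1 hn]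

theorem partialSum_congr (h : ∀ n ∈ z.support, n < m ↔ n < m') :
    partialSum R x m z = partialSum R x m' z :=
  Finsupp.sum_congr fun n hn => by simp only [h n hn]

theorem partialSum_eq_linearCombination (h : ∀ n ∈ z.support, n < m) :
    partialSum R x m z = Finsupp.linearCombination R x z :=
  Finsupp.sum_congr fun n hn => by simp [h n hn]

theorem partialSum_eq_zero (h : ∀ n ∈ z.support, m ≤ n) : partialSum R x m z = 0 :=
  sum_eq_zero fun n hn => by simp [(h n hn).not_gt]

theorem partialSum_of_straddles {v : ℕ → ℕ →₀ R} {K k : ℕ} (h : Straddles v K m) (hk : k ≠ K) :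
    partialSum R x m (v k) = if k < K then Finsupp.linearCombination R x (v k) else 0 := by
  split_ifs with hkK
  · exact partialSum_eq_linearCombination (h.1 k hkK)
  · exact partialSum_eq_zero (h.2 k (by omega))

theorem partialSum_sub_partialSum_sum {R M : Type*} [Ring R] [AddCommGroup M] [Module R M]
    {x : ℕ → M} {v : ℕ → ℕ →₀ R} {K q r : ℕ} (hq : Straddles v K q) (hr : Straddles v K r)
    {s : Finset ℕ} (hK : K ∈ s) (a : ℕ → R) :
    partialSum R x r (∑ k ∈ s, a k • v k) - partialSum R x q (∑ k ∈ s, a k • v k) =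
      a K • (partialSum R x r (v K) - partialSum R x q (v K)) := by
  simp only [map_sum, map_smul, ← sum_sub_distrib, ← smul_sub]
  refine sum_eq_single K (fun k _ hk => ?_) (absurd hK)
  rw [partialSum_of_straddles hq hk, partialSum_of_straddles hr hk, sub_self, smul_zero]

end PartialSum

section PartialSumNorm

variable {X : Type*} [NormedAddCommGroup X] [NormedSpace ℝ X] {x : ℕ → X} {z : ℕ →₀ ℝ}

/-- The norm `‖z‖_E` of `E_X`, evaluated on `c₀₀`. -/
noncomputable def partialSumNorm (x : ℕ → X) (z : ℕ →₀ ℝ) : ℝ :=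
  ⨆ m, ‖partialSum ℝ x (m + 1) z‖

theorem bddAbove_range_norm_partialSum (x : ℕ → X) (z : ℕ →₀ ℝ) :
    BddAbove (Set.range fun m => ‖partialSum ℝ x m z‖) := by
  obtain ⟨N, hN⟩ := z.support.bddAbove
  refine ((Set.finite_Iic (N + 1)).image fun m => ‖partialSum ℝ x m z‖).bddAbove.mono ?_
  rintro _ ⟨m, rfl⟩
  refine ⟨min m (N + 1), Set.mem_Iic.2 (min_le_right _ _),
    congrArg norm (partialSum_congr fun n hn => ?_)⟩
  have := hN hn
  simp only [lt_min_iff]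
  omega

theorem norm_partialSum_le_partialSumNorm (m : ℕ) :
    ‖partialSum ℝ x m z‖ ≤ partialSumNorm x z := by
  cases m with
  | zero =>
    rw [partialSum_eq_zero fun n _ => Nat.zero_le n, norm_zero]
    exact Real.iSup_nonneg fun _ => norm_nonneg _
  | succ m =>
    exact le_ciSup ((bddAbove_range_norm_partialSum x z).mono (Set.range_comp_subset_range _ _)) m

theorem partialSumNorm_nonneg : 0 ≤ partialSumNorm x z :=
  (norm_nonneg (partialSum ℝ x 0 z)).trans (norm_partialSum_le_partialSumNorm 0)

theorem partialSumNorm_le {b : ℝ} (h : ∀ m, ‖partialSum ℝ x m z‖ ≤ b) : partialSumNorm x z ≤ b :=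
  ciSup_le fun m => h (m + 1)

theorem exists_lt_norm_partialSum {b : ℝ} (hb : b < partialSumNorm x z) :
    ∃ m, b < ‖partialSum ℝ x m z‖ :=
  let ⟨m, hm⟩ := exists_lt_of_lt_ciSup hb
  ⟨m + 1, hm⟩

theorem sum_inv_two_pow_le (s : Finset ℕ) : ∑ k ∈ s, ((2 : ℝ) ^ k)⁻¹ ≤ 2 := by
  simp_rw [← inv_pow, inv_eq_one_div]
  exact (summable_geometric_two.sum_le_tsum s fun _ _ => by positivity).trans_eq
    tsum_geometric_two

theorem norm_partialSum_le_of_straddles {v : ℕ → ℕ →₀ ℝ} {C : ℝ}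
    (hC : ∀ k, partialSumNorm x (v k) ≤ C)
    (hsmall : ∀ k, ‖Finsupp.linearCombination ℝ x (v k)‖ ≤ ((2 : ℝ) ^ k)⁻¹)
    {K m : ℕ} (hK : Straddles v K m) (k : ℕ) :
    ‖partialSum ℝ x m (v k)‖ ≤ (if k = K then C else 0) + ((2 : ℝ) ^ k)⁻¹ := by
  rcases eq_or_ne k K with rfl | hk
  · rw [if_pos rfl]
    linarith [norm_partialSum_le_partialSumNorm (x := x) (z := v k) m, hC k,
      (by positivity : (0 : ℝ) ≤ ((2 : ℝ) ^ k)⁻¹)]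
  · rw [if_neg hk, zero_add, partialSum_of_straddles hK hk]
    split_ifs
    · exact hsmall k
    · rw [norm_zero]; positivity

namespace IsBlockSequence

variable {v : ℕ → ℕ →₀ ℝ}

theorem exists_straddles_lt_norm_partialSum (hv : IsBlockSequence v) {K : ℕ} {b : ℝ}
    (hb0 : 0 ≤ b) (hb : b < partialSumNorm x (v K)) :
    ∃ r, Straddles v K r ∧ b < ‖partialSum ℝ x r (v K)‖ := by
  obtain ⟨m, hm⟩ := exists_lt_norm_partialSum hb
  set i' := (v K).support.max' (hv.support_nonempty K)
  set r := min m (i' + 1)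
  have hr : partialSum ℝ x r (v K) = partialSum ℝ x m (v K) := partialSum_congr fun n hn => by
    have := (v K).support.le_max' n hn
    simp only [r, lt_min_iff]
    omega
  obtain ⟨i, hi, hir⟩ : ∃ i ∈ (v K).support, i < r := by
    by_contra! h
    rw [← hr, partialSum_eq_zero h, norm_zero] at hm
    linarith
  exact ⟨r, hv.straddles_of_mem_support hi hir.le ((v K).support.max'_mem _) (min_le_right _ _),
    hr ▸ hm⟩

theorem mul_abs_le_partialSumNorm_sum (hv : IsBlockSequence v) {c : ℝ} (hc : 0 < c) {K : ℕ}
    (hK : c ≤ partialSumNorm x (v K)) {s : Finset ℕ} (hKs : K ∈ s) (a : ℕ → ℝ) :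
    c / 4 * |a K| ≤ partialSumNorm x (∑ k ∈ s, a k • v k) := by
  obtain ⟨r, hr, hcr⟩ := hv.exists_straddles_lt_norm_partialSum (half_pos hc).le
    ((half_lt_self hc).trans_le hK)
  set i := (v K).support.min' (hv.support_nonempty K)
  have hq : Straddles v K i :=
    hv.straddles_of_mem_support (min'_mem _ _) le_rfl (min'_mem _ _) (Nat.le_succ i)
  have hq0 : partialSum ℝ x i (v K) = 0 := partialSum_eq_zero fun n hn => min'_le _ n hn
  set z := ∑ k ∈ s, a k • v k
  calc c / 4 * |a K| ≤ |a K| * ‖partialSum ℝ x r (v K)‖ / 2 := by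
        nlinarith [mul_le_mul_of_nonneg_left hcr.le (abs_nonneg (a K))]
    _ = ‖partialSum ℝ x r z - partialSum ℝ x i z‖ / 2 := by
        rw [partialSum_sub_partialSum_sum hq hr hKs, hq0, sub_zero, norm_smul, Real.norm_eq_abs]
    _ ≤ (‖partialSum ℝ x r z‖ + ‖partialSum ℝ x i z‖) / 2 := by gcongr; exact norm_sub_le _ _
    _ ≤ partialSumNorm x z := by
        linarith [norm_partialSum_le_partialSumNorm (x := x) (z := z) r,
          norm_partialSum_le_partialSumNorm (x := x) (z := z) i]

theorem mul_sup'_le_partialSumNorm_sum (hv : IsBlockSequence v) {c : ℝ} (hc : 0 < c)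
    (hlow : ∀ k, c ≤ partialSumNorm x (v k)) {s : Finset ℕ} (hs : s.Nonempty) (a : ℕ → ℝ) :
    c / 4 * s.sup' hs (fun k => |a k|) ≤ partialSumNorm x (∑ k ∈ s, a k • v k) := by
  obtain ⟨K, hK, hmax⟩ := exists_mem_eq_sup' hs fun k => |a k|
  rw [hmax]
  exact hv.mul_abs_le_partialSumNorm_sum hc (hlow K) hK a

theorem partialSumNorm_sum_le_mul_sup' (hv : IsBlockSequence v) {C : ℝ}
    (hC : ∀ k, partialSumNorm x (v k) ≤ C)
    (hsmall : ∀ k, ‖Finsupp.linearCombination ℝ x (v k)‖ ≤ ((2 : ℝ) ^ k)⁻¹)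
    {s : Finset ℕ} (hs : s.Nonempty) (a : ℕ → ℝ) :
    partialSumNorm x (∑ k ∈ s, a k • v k) ≤ (C + 2) * s.sup' hs (fun k => |a k|) := by
  set A := s.sup' hs (fun k => |a k|)
  have hA : ∀ k ∈ s, |a k| ≤ A := fun k hk => le_sup' (fun k => |a k|) hk
  have hA0 : 0 ≤ A := (abs_nonneg _).trans (hA _ hs.choose_spec)
  have hC0 : 0 ≤ C := partialSumNorm_nonneg.trans (hC 0)
  refine partialSumNorm_le fun m => ?_
  obtain ⟨K, hK⟩ := hv.exists_straddles m
  calc ‖partialSum ℝ x m (∑ k ∈ s, a k • v k)‖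
      ≤ ∑ k ∈ s, |a k| * ‖partialSum ℝ x m (v k)‖ := by
        simp only [map_sum, map_smul]
        exact (norm_sum_le _ _).trans_eq (sum_congr rfl fun k _ => by
          rw [norm_smul, Real.norm_eq_abs])
    _ ≤ ∑ k ∈ s, A * ((if k = K then C else 0) + ((2 : ℝ) ^ k)⁻¹) :=
        sum_le_sum fun k hk => mul_le_mul (hA k hk)
          (norm_partialSum_le_of_straddles hC hsmall hK k) (norm_nonneg _) hA0
    _ = A * ((∑ k ∈ s, if k = K then C else 0) + ∑ k ∈ s, ((2 : ℝ) ^ k)⁻¹) := by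
        rw [← mul_sum, sum_add_distrib]
    _ ≤ A * (C + 2) := by
        gcongr
        · rw [sum_ite_eq']; split_ifs <;> linarith
        · exact sum_inv_two_pow_le s
    _ = (C + 2) * A := mul_comm _ _

end IsBlockSequence

end PartialSumNorm

theorem stmt_2_general {X : Type*} [NormedAddCommGroup X] [NormedSpace ℝ X]
    (x : ℕ → X)
    {E : Type*} [NormedAddCommGroup E] [NormedSpace ℝ E]
    (ι : (ℕ →₀ ℝ) →ₗ[ℝ] E)
    (hnorm : ∀ z : ℕ →₀ ℝ,
      ‖ι z‖ = ⨆ m : ℕ, ‖∑ n ∈ Finset.range (m + 1), z n • x n‖)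
    (Q : E →L[ℝ] X) (hQ : ∀ n, Q (ι (Finsupp.single n 1)) = x n)
    -- `(v k)` is a block sequence of `(e n)`
    (v : ℕ → (ℕ →₀ ℝ)) (hv0 : ∀ k, v k ≠ 0)
    (hblock : ∀ k, ∀ i ∈ (v k).support, ∀ j ∈ (v (k + 1)).support, i < j)
    -- semi-normalized
    (c C : ℝ) (hc : 0 < c)
    (hsn : ∀ k, c ≤ ‖ι (v k)‖ ∧ ‖ι (v k)‖ ≤ C)
    -- small images under `Q`
    (hQv : ∀ k, ‖Q (ι (v k))‖ ≤ ((2 : ℝ) ^ k)⁻¹) :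
    -- `(v k)` is equivalent to the unit vector basis of `c₀`
    ∃ M : ℝ, 1 ≤ M ∧ ∀ (j : ℕ) (a : ℕ → ℝ),
      M⁻¹ * (Finset.range (j + 1)).sup' Finset.nonempty_range_add_one (fun k => |a k|)
          ≤ ‖∑ k ∈ Finset.range (j + 1), a k • ι (v k)‖ ∧
      ‖∑ k ∈ Finset.range (j + 1), a k • ι (v k)‖
          ≤ M * (Finset.range (j + 1)).sup' Finset.nonempty_range_add_one (fun k => |a k|) := by
  have hv : IsBlockSequence v := ⟨hv0, hblock⟩
  have hι : ∀ z, ‖ι z‖ = partialSumNorm x z := fun z => by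
    simp only [hnorm, partialSumNorm, partialSum_apply_eq_sum_range]
  have hQι : Q.toLinearMap ∘ₗ ι = Finsupp.linearCombination ℝ x :=
    Finsupp.basisSingleOne.ext fun n => by simp [hQ]
  have hsmall k : ‖Finsupp.linearCombination ℝ x (v k)‖ ≤ ((2 : ℝ) ^ k)⁻¹ := hQι ▸ hQv k
  have hlow k : c ≤ partialSumNorm x (v k) := hι (v k) ▸ (hsn k).1
  have hhigh k : partialSumNorm x (v k) ≤ C := hι (v k) ▸ (hsn k).2
  have hC0 : 0 ≤ C := partialSumNorm_nonneg.trans (hhigh 0)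
  refine ⟨max (4 / c) (C + 2), by linarith [le_max_right (4 / c) (C + 2)], fun j a => ?_⟩
  have hA0 : 0 ≤ (range (j + 1)).sup' nonempty_range_add_one fun k => |a k| :=
    (abs_nonneg (a 0)).trans (le_sup' (fun k => |a k|) (by simp))
  simp only [← map_smul, ← map_sum, hι]
  constructor
  · calc (max (4 / c) (C + 2))⁻¹ * (range (j + 1)).sup' _ (fun k => |a k|)
        ≤ c / 4 * (range (j + 1)).sup' _ (fun k => |a k|) := by
          gcongr
          exact (inv_anti₀ (by positivity) (le_max_left _ _)).trans_eq (inv_div 4 c)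
      _ ≤ _ := hv.mul_sup'_le_partialSumNorm_sum hc hlow _ a
  · exact (hv.partialSumNorm_sum_le_mul_sup' hhigh hsmall _ a).trans
      (by gcongr; exact le_max_right _ _)

/-- In the space `E_X` (the completion of `c₀₀` under
`‖z‖_E = sup_m ‖∑_{n=0}^m z(n)·x_n‖_X`, with dense image `ι` of `c₀₀`, unit
vectors `e n = ι (single n 1)` and quotient operator `Q` with `Q (e n) = x n`):
every semi-normalized block sequence `(v k)` of `(e n)` with
`‖Q (v k)‖ ≤ 2⁻ᵏ` is equivalent to the standard unit vector basis of `c₀`. -/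
theorem stmt_2 {X : Type*} [NormedAddCommGroup X] [NormedSpace ℝ X] [CompleteSpace X]
    (x : ℕ → X) (hx1 : ∀ n, ‖x n‖ = 1)
    (hxd : ∀ y : X, ‖y‖ = 1 → ∀ ε : ℝ, 0 < ε → ∃ n, ‖y - x n‖ < ε)
    {E : Type*} [NormedAddCommGroup E] [NormedSpace ℝ E] [CompleteSpace E]
    (ι : (ℕ →₀ ℝ) →ₗ[ℝ] E) (hιd : DenseRange ι)
    (hnorm : ∀ z : ℕ →₀ ℝ,
      ‖ι z‖ = ⨆ m : ℕ, ‖∑ n ∈ Finset.range (m + 1), z n • x n‖)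
    (Q : E →L[ℝ] X) (hQ : ∀ n, Q (ι (Finsupp.single n 1)) = x n)
    -- `(v k)` is a block sequence of `(e n)`
    (v : ℕ → (ℕ →₀ ℝ)) (hv0 : ∀ k, v k ≠ 0)
    (hblock : ∀ k, ∀ i ∈ (v k).support, ∀ j ∈ (v (k + 1)).support, i < j)
    -- semi-normalized
    (c C : ℝ) (hc : 0 < c) (hcC : c ≤ C)
    (hsn : ∀ k, c ≤ ‖ι (v k)‖ ∧ ‖ι (v k)‖ ≤ C)
    -- small images under `Q`
    (hQv : ∀ k, ‖Q (ι (v k))‖ ≤ ((2 : ℝ) ^ k)⁻¹) :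
    -- `(v k)` is equivalent to the unit vector basis of `c₀`
    ∃ M : ℝ, 1 ≤ M ∧ ∀ (j : ℕ) (a : ℕ → ℝ),
      M⁻¹ * (Finset.range (j + 1)).sup' Finset.nonempty_range_add_one (fun k => |a k|)
          ≤ ‖∑ k ∈ Finset.range (j + 1), a k • ι (v k)‖ ∧
      ‖∑ k ∈ Finset.range (j + 1), a k • ι (v k)‖
          ≤ M * (Finset.range (j + 1)).sup' Finset.nonempty_range_add_one (fun k => |a k|) :=
  stmt_2_general x ι hnorm Q hQ v hv0 hblock c C hc hsn hQv
end

section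
/- There exists a bounded linear operator Q : E_X → X such that Q(e_n) = x_n for every n ∈ ℕ, the operator norm of Q equals 1, and Q is surjective. In particular, X is a quotient of E_X. -/
/-!
On `c₀₀` the map `z ↦ ∑ z n • x n` is bounded by `‖·‖_E`, since the full sum is one of the partial
sums whose supremum defines `‖z‖_E`; so it extends to an operator `Q` of norm at most `1`, which
sends the vectors `e n`, of norm at most `1`, to the unit vectors `x n`, whence `‖Q‖ = 1`.
As the `x n` are dense in the unit sphere, every unit vector of `X` is within `1/2` of the image of
the unit ball of `E_X`, and the successive-approximation argument of the open mapping theorem makes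
`Q` surjective.
-/

open Filter Topology Finset

theorem hasSum_sub_succ_of_tendsto {G : Type*} [AddCommGroup G] [TopologicalSpace G]
    [IsTopologicalAddGroup G] [T2Space G] {u : ℕ → G} {l : G} (hu : Tendsto u atTop (𝓝 l))
    (hs : Summable fun n => u n - u (n + 1)) : HasSum (fun n => u n - u (n + 1)) (u 0 - l) := by
  rw [hs.hasSum_iff_tendsto_nat]
  simpa only [sum_range_sub'] using tendsto_const_nhds.sub hu

namespace ContinuousLinearMap

variable {E F : Type*} [NormedAddCommGroup E] [CompleteSpace E] [NormedAddCommGroup F]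

theorem surjective_of_approx_preimage {𝕜 : Type*} [NontriviallyNormedField 𝕜] [NormedSpace 𝕜 E]
    [NormedSpace 𝕜 F] (f : E →L[𝕜] F) {C ε : ℝ} (hε₀ : 0 ≤ ε) (hε : ε < 1)
    (h : ∀ y, ∃ x, ‖x‖ ≤ C * ‖y‖ ∧ ‖y - f x‖ ≤ ε * ‖y‖) : Function.Surjective f := by
  choose g hg using h
  intro y
  -- `r n` is what is left of `y` after `n` approximation steps.
  set r : ℕ → F := fun n => (fun v => v - f (g v))^[n] y
  have hr_succ : ∀ n, r (n + 1) = r n - f (g (r n)) := fun n =>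
    Function.iterate_succ_apply' _ n y
  have hr : ∀ n, ‖r n‖ ≤ ε ^ n * ‖y‖ := by
    intro n
    induction n with
    | zero => simp [r]
    | succ n ih =>
      calc ‖r (n + 1)‖ ≤ ε * ‖r n‖ := hr_succ n ▸ (hg (r n)).2
        _ ≤ ε * (ε ^ n * ‖y‖) := by gcongr
        _ = ε ^ (n + 1) * ‖y‖ := by ring
  have hsum : Summable fun n => g (r n) := by
    refine .of_norm_bounded ((summable_geometric_of_lt_one hε₀ hε).mul_left (|C| * ‖y‖))
      fun n => ?_
    calc ‖g (r n)‖ ≤ C * ‖r n‖ := (hg (r n)).1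
      _ ≤ |C| * (ε ^ n * ‖y‖) := mul_le_mul (le_abs_self C) (hr n) (norm_nonneg _) (abs_nonneg C)
      _ = |C| * ‖y‖ * ε ^ n := by ring
  have hr_lim : Tendsto r atTop (𝓝 0) := by
    refine squeeze_zero_norm hr ?_
    simpa using (tendsto_pow_atTop_nhds_zero_of_lt_one hε₀ hε).mul_const ‖y‖
  have htel : HasSum (fun n => f (g (r n))) y := by
    have hstep : ∀ n, r n - r (n + 1) = f (g (r n)) := fun n => by
      rw [hr_succ, sub_sub_cancel]
    simpa only [hstep, sub_zero, r, Function.iterate_zero_apply] using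
      hasSum_sub_succ_of_tendsto hr_lim (by simpa only [hstep] using f.summable hsum)
  exact ⟨∑' n, g (r n), by rw [f.map_tsum hsum]; exact htel.tsum_eq⟩

theorem surjective_of_approx_preimage_sphere {𝕜 : Type*} [RCLike 𝕜] [NormedSpace 𝕜 E]
    [NormedSpace 𝕜 F] (f : E →L[𝕜] F) {C ε : ℝ} (hε₀ : 0 ≤ ε) (hε : ε < 1)
    (h : ∀ y, ‖y‖ = 1 → ∃ x, ‖x‖ ≤ C ∧ ‖y - f x‖ ≤ ε) : Function.Surjective f := by
  refine f.surjective_of_approx_preimage (C := C) hε₀ hε fun y => ?_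
  rcases eq_or_ne y 0 with rfl | hy
  · exact ⟨0, by simp⟩
  obtain ⟨x, hxC, hyx⟩ := h _ (norm_smul_inv_norm (𝕜 := 𝕜) hy)
  have hy' : (‖y‖ : 𝕜) ≠ 0 := by exact_mod_cast norm_ne_zero_iff.mpr hy
  refine ⟨(‖y‖ : 𝕜) • x, ?_, ?_⟩
  · rw [norm_smul, RCLike.norm_coe_norm, mul_comm]
    gcongr
  · have hsplit : y - f ((‖y‖ : 𝕜) • x) = (‖y‖ : 𝕜) • ((‖y‖ : 𝕜)⁻¹ • y - f x) := by
      rw [smul_sub, smul_inv_smul₀ hy', map_smul]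
    calc ‖y - f ((‖y‖ : 𝕜) • x)‖ = ‖y‖ * ‖(‖y‖ : 𝕜)⁻¹ • y - f x‖ := by
          rw [hsplit, norm_smul, RCLike.norm_coe_norm]
      _ ≤ ‖y‖ * ε := by gcongr
      _ = ε * ‖y‖ := mul_comm _ _

end ContinuousLinearMap

section PartialSums

variable {X : Type*} [NormedAddCommGroup X] [NormedSpace ℝ X] {x : ℕ → X}

theorem norm_sum_smul_le_sum_abs (hx : ∀ n, ‖x n‖ ≤ 1) (z : ℕ →₀ ℝ) (s : Finset ℕ) :
    ‖∑ n ∈ s, z n • x n‖ ≤ z.sum fun _ a => |a| := by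
  rw [z.sum_of_support_subset subset_union_right _ fun _ _ => abs_zero]
  calc ‖∑ n ∈ s, z n • x n‖ ≤ ∑ n ∈ s, |z n| := by
        refine (norm_sum_le _ _).trans (sum_le_sum fun n _ => ?_)
        rw [norm_smul, Real.norm_eq_abs]
        exact mul_le_of_le_one_right (abs_nonneg _) (hx n)
    _ ≤ ∑ n ∈ s ∪ z.support, |z n| :=
        sum_le_sum_of_subset_of_nonneg subset_union_left fun _ _ _ => abs_nonneg _

theorem norm_linearCombination_le_iSup_norm_partialSum (hx : ∀ n, ‖x n‖ ≤ 1) (z : ℕ →₀ ℝ) :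
    ‖Finsupp.linearCombination ℝ x z‖ ≤ ⨆ m : ℕ, ‖∑ n ∈ range (m + 1), z n • x n‖ := by
  obtain ⟨N, hN⟩ := z.support.exists_nat_subset_range
  have hbdd : BddAbove (Set.range fun m : ℕ => ‖∑ n ∈ range (m + 1), z n • x n‖) :=
    ⟨_, Set.forall_mem_range.2 fun m => norm_sum_smul_le_sum_abs hx z _⟩
  rw [Finsupp.linearCombination_apply, z.sum_of_support_subset
    (hN.trans (range_subset_range.2 N.le_succ)) (fun i a => a • x i) fun _ _ => zero_smul _ _]
  exact le_ciSup hbdd N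

theorem iSup_norm_partialSum_single_le (hx : ∀ n, ‖x n‖ ≤ 1) (n : ℕ) :
    ⨆ m : ℕ, ‖∑ k ∈ range (m + 1), Finsupp.single n (1 : ℝ) k • x k‖ ≤ 1 :=
  ciSup_le fun _ => (norm_sum_smul_le_sum_abs hx _ _).trans_eq (by simp)

end PartialSums

/-- There exists a bounded linear operator `Q : E_X → X` with
`Q (e n) = x n` for every `n`, of operator norm exactly `1`, which is
surjective; in particular `X` is a quotient of `E_X`. -/
theorem stmt_5 {X : Type*} [NormedAddCommGroup X] [NormedSpace ℝ X] [CompleteSpace X]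
    (x : ℕ → X) (hx1 : ∀ n, ‖x n‖ = 1)
    (hxd : ∀ y : X, ‖y‖ = 1 → ∀ ε : ℝ, 0 < ε → ∃ n, ‖y - x n‖ < ε)
    {E : Type*} [NormedAddCommGroup E] [NormedSpace ℝ E] [CompleteSpace E]
    (ι : (ℕ →₀ ℝ) →ₗ[ℝ] E) (hιd : DenseRange ι)
    (hnorm : ∀ z : ℕ →₀ ℝ,
      ‖ι z‖ = ⨆ m : ℕ, ‖∑ n ∈ Finset.range (m + 1), z n • x n‖) :
    ∃ Q : E →L[ℝ] X, (∀ n : ℕ, Q (ι (Finsupp.single n 1)) = x n) ∧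
      ‖Q‖ = 1 ∧ Function.Surjective Q := by
  have hx : ∀ n, ‖x n‖ ≤ 1 := fun n => (hx1 n).le
  have hS : ∀ z, ‖Finsupp.linearCombination ℝ x z‖ ≤ 1 * ‖ι z‖ := fun z => by
    rw [one_mul, hnorm]; exact norm_linearCombination_le_iSup_norm_partialSum hx z
  set Q := (Finsupp.linearCombination ℝ x).extendOfNorm ι
  have hQe : ∀ n, Q (ι (Finsupp.single n 1)) = x n := fun n => by
    rw [LinearMap.extendOfNorm_eq hιd ⟨1, hS⟩, Finsupp.linearCombination_single, one_smul]
  have he : ∀ n, ‖ι (Finsupp.single n 1)‖ ≤ 1 := fun n =>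
    (hnorm _).trans_le (iSup_norm_partialSum_single_le hx n)
  refine ⟨Q, hQe, (LinearMap.opNorm_extendOfNorm_le hιd zero_le_one hS).antisymm ?_, ?_⟩
  · simpa only [hQe, hx1] using Q.unit_le_opNorm _ (he 0)
  · refine Q.surjective_of_approx_preimage_sphere (C := 1) (ε := 1 / 2) (by norm_num)
      (by norm_num) fun y hy => ?_
    obtain ⟨n, hn⟩ := hxd y hy (1 / 2) (by norm_num)
    exact ⟨ι (Finsupp.single n 1), he n, by rw [hQe]; exact hn.le⟩
end

section
/- For every normalized basic sequence (w_k)_{k∈ℕ} in X (i.e. ‖w_k‖_X = 1 for all k and there exists K ≥ 1 such that for all i ≤ j and all reals a_0, …, a_j, ‖Σ_{k=0}^i a_k w_k‖_X ≤ K·‖Σ_{k=0}^j a_k w_k‖_X) there exist natural numbers n_0 < n_1 < n_2 < … and a constant C ≥ 1 such that for every j ∈ ℕ and all reals a_0, …, a_j we have C^{-1}·‖Σ_{k=0}^j a_k w_k‖_X ≤ ‖Σ_{k=0}^j a_k e_{n_k}‖_E ≤ C·‖Σ_{k=0}^j a_k w_k‖_X. -/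
set_option maxHeartbeats 1000000 in
theorem exists_big_approx {X : Type*} [NormedAddCommGroup X] [NormedSpace ℝ X]
    (x : ℕ → X)
    (hxd : ∀ y : X, ‖y‖ = 1 → ∀ ε : ℝ, 0 < ε → ∃ n, ‖y - x n‖ < ε)
    (u v : X) (hu : ‖u‖ = 1) (hv : ‖v‖ = 1) (K : ℝ) (hK : 1 ≤ K)
    (hind : ∀ b c : ℝ, |b| ≤ K * ‖b • u + c • v‖)
    (N : ℕ) (ε : ℝ) (hε : 0 < ε) : ∃ n, N < n ∧ ‖u - x n‖ < ε := by
  have hK0 : (0:ℝ) < K := lt_of_lt_of_le one_pos hK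
  set g : ℝ → X := fun t => u + t • v with hg
  have hglb : ∀ t : ℝ, 0 < t → t ≤ 1/2 → 1 - t ≤ ‖g t‖ := by
    intro t ht ht2
    have h1 : ‖u‖ ≤ ‖g t‖ + ‖t • v‖ := by
      have h0 : u = g t - t • v := by simp [hg]
      rw [h0]; exact norm_sub_le _ _
    rw [hu, norm_smul, hv, Real.norm_eq_abs, abs_of_pos ht] at h1
    linarith
  have hgub : ∀ t : ℝ, 0 < t → t ≤ 1/2 → ‖g t‖ ≤ 1 + t := by
    intro t ht ht2
    have h1 : ‖g t‖ ≤ ‖u‖ + ‖t • v‖ := norm_add_le _ _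
    rw [hu, norm_smul, hv, Real.norm_eq_abs, abs_of_pos ht] at h1
    linarith
  have hgpos : ∀ t : ℝ, 0 < t → t ≤ 1/2 → 0 < ‖g t‖ := by
    intro t ht ht2; have := hglb t ht ht2; linarith
  set y : ℝ → X := fun t => ‖g t‖⁻¹ • g t with hy
  have hy1 : ∀ t : ℝ, 0 < t → t ≤ 1/2 → ‖y t‖ = 1 := by
    intro t ht ht2
    simp only [hy, norm_smul, norm_inv, norm_norm]
    field_simp
    exact div_self (ne_of_gt (hgpos t ht ht2))
  have hyu : ∀ t : ℝ, 0 < t → t ≤ 1/2 → ‖y t - u‖ ≤ 2 * t := by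
    intro t ht ht2
    have hgn := hgpos t ht ht2
    have h1 : y t - u = (‖g t‖⁻¹ - 1) • g t + t • v := by
      simp only [hy, hg]; module
    rw [h1]
    have h2 : ‖(‖g t‖⁻¹ - 1) • g t + t • v‖ ≤ ‖(‖g t‖⁻¹ - 1) • g t‖ + ‖t • v‖ :=
      norm_add_le _ _
    have h3 : ‖(‖g t‖⁻¹ - 1) • g t‖ = |‖g t‖⁻¹ - 1| * ‖g t‖ := by
      rw [norm_smul, Real.norm_eq_abs]
    have h4 : |‖g t‖⁻¹ - 1| * ‖g t‖ = |1 - ‖g t‖| := by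
      have e : (‖g t‖⁻¹ - 1) * ‖g t‖ = 1 - ‖g t‖ := by field_simp
      rw [← abs_of_pos hgn, ← abs_mul, abs_of_pos hgn, e]
    have h5 : |1 - ‖g t‖| ≤ t := by
      have e1 := hglb t ht ht2; have e2 := hgub t ht ht2
      rw [abs_le]; constructor <;> linarith
    have h6 : ‖t • v‖ = t := by
      rw [norm_smul, hv, Real.norm_eq_abs, abs_of_pos ht]; ring
    calc ‖(‖g t‖⁻¹ - 1) • g t + t • v‖ ≤ ‖(‖g t‖⁻¹ - 1) • g t‖ + ‖t • v‖ := h2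
      _ = |1 - ‖g t‖| + t := by rw [h3, h4, h6]
      _ ≤ 2 * t := by linarith
  have hαlb : ∀ t : ℝ, 0 < t → t ≤ 1/2 → (2:ℝ)/3 ≤ ‖g t‖⁻¹ := by
    intro t ht ht2
    have h1 : ‖g t‖ ≤ 3/2 := by have := hgub t ht ht2; linarith
    have := inv_anti₀ (hgpos t ht ht2) h1
    linarith [this]
  have hαub : ∀ t : ℝ, 0 < t → t ≤ 1/2 → ‖g t‖⁻¹ ≤ 2 := by
    intro t ht ht2
    have h1 : (1:ℝ)/2 ≤ ‖g t‖ := by have := hglb t ht ht2; linarith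
    have := inv_anti₀ (by norm_num : (0:ℝ) < 1/2) h1
    linarith [this]
  -- separation
  have hsep : ∀ t s : ℝ, 0 < s → s ≤ t/6 → t ≤ 1/2 →
      t / (3*(K+1)) ≤ ‖y t - y s‖ := by
    intro t s hs hs6 ht2
    have ht : 0 < t := by linarith
    have hs2 : s ≤ 1/2 := by linarith
    set α := ‖g t‖⁻¹
    set β := ‖g s‖⁻¹
    have hdiff : y t - y s = (α - β) • u + (α*t - β*s) • v := by
      simp only [hy, hg, α, β]; module
    have hb := hind (α - β) (α*t - β*s)
    have hcv : |α*t - β*s| ≤ (K+1) * ‖y t - y s‖ := by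
      have h1 : (α*t - β*s) • v = (y t - y s) - (α - β) • u := by
        rw [hdiff]; abel
      have h2 : ‖(α*t - β*s) • v‖ = |α*t - β*s| := by
        rw [norm_smul, hv, Real.norm_eq_abs]; ring
      have h3 : ‖(y t - y s) - (α - β) • u‖ ≤ ‖y t - y s‖ + ‖(α - β) • u‖ :=
        norm_sub_le _ _
      have h4 : ‖(α - β) • u‖ = |α - β| := by
        rw [norm_smul, hu, Real.norm_eq_abs]; ring
      rw [← hdiff] at hb
      have h5 : |α*t - β*s| ≤ ‖y t - y s‖ + |α - β| := by
        calc |α*t - β*s| = ‖(α*t - β*s) • v‖ := h2.symm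
          _ = ‖(y t - y s) - (α - β) • u‖ := by rw [h1]
          _ ≤ ‖y t - y s‖ + ‖(α - β) • u‖ := norm_sub_le _ _
          _ = ‖y t - y s‖ + |α - β| := by rw [h4]
      nlinarith [h5, hb]
    have hcoef : t/3 ≤ α*t - β*s := by
      have e1 := hαlb t ht ht2
      have e2 := hαub s hs hs2
      have e3 : (2:ℝ)/3 * t ≤ α * t := by nlinarith
      have e4 : β * s ≤ 2 * s := by nlinarith
      linarith
    have habs : t/3 ≤ |α*t - β*s| := le_trans hcoef (le_abs_self _)
    have hK1 : (0:ℝ) < K + 1 := by linarith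
    rw [div_le_iff₀ (by linarith : (0:ℝ) < 3*(K+1))]
    nlinarith [habs.trans hcv]
  -- the family of candidate points
  obtain ⟨δ, hδ0, hδε, hδh⟩ : ∃ δ : ℝ, 0 < δ ∧ δ ≤ ε/8 ∧ δ ≤ 1/2 :=
    ⟨min (ε/8) (1/2), lt_min (by linarith) (by norm_num), min_le_left _ _, min_le_right _ _⟩
  obtain ⟨tt, htt0, httδ, httanti, httmono⟩ :
      ∃ tt : ℕ → ℝ, (∀ i, 0 < tt i) ∧ (∀ i, tt i ≤ δ) ∧
        (∀ i i', i ≤ i' → tt i' ≤ tt i) ∧ (∀ i i', i < i' → tt i' ≤ tt i / 6) := by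
    refine ⟨fun i => δ * (1/6)^i, fun i => mul_pos hδ0 (pow_pos (by norm_num) i), ?_, ?_, ?_⟩
    · intro i
      have h1 : (1/6:ℝ)^i ≤ 1 := pow_le_one₀ (by norm_num) (by norm_num)
      have h2 : δ * (1/6:ℝ)^i ≤ δ * 1 := mul_le_mul_of_nonneg_left h1 hδ0.le
      linarith
    · intro i i' hii
      exact mul_le_mul_of_nonneg_left
        (pow_le_pow_of_le_one (by norm_num) (by norm_num) hii) hδ0.le
    · intro i i' hii
      have h1 : (1/6:ℝ)^i' ≤ (1/6)^(i+1) :=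
        pow_le_pow_of_le_one (by norm_num) (by norm_num) hii
      have h2 : δ * (1/6:ℝ)^i' ≤ δ * (1/6)^(i+1) := mul_le_mul_of_nonneg_left h1 hδ0.le
      have h3 : δ * (1/6:ℝ)^(i+1) = δ * (1/6)^i / 6 := by rw [pow_succ]; ring
      linarith
  have htt2 : ∀ i, tt i ≤ 1/2 := fun i => le_trans (httδ i) hδh
  obtain ⟨ρ, hρ0, hρle⟩ : ∃ ρ : ℝ, 0 < ρ ∧ ∀ i, i ≤ N+1 → ρ ≤ tt i / (3*(K+1)) := by
    refine ⟨tt (N+1) / (3*(K+1)), div_pos (htt0 _) (by linarith), fun i hi => ?_⟩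
    have h1 : tt (N+1) ≤ tt i := httanti i (N+1) hi
    have hKp : (0:ℝ) < 3*(K+1) := by linarith
    gcongr
  obtain ⟨r, hr0, hrε, hrρ⟩ : ∃ r : ℝ, 0 < r ∧ r ≤ ε/2 ∧ r ≤ ρ/2 :=
    ⟨min (ε/2) (ρ/2), lt_min (by linarith) (by linarith), min_le_left _ _, min_le_right _ _⟩
  by_contra hcon
  push_neg at hcon
  have hm : ∀ i : ℕ, ∃ m, ‖y (tt i) - x m‖ < r :=
    fun i => hxd _ (hy1 _ (htt0 i) (htt2 i)) r hr0
  choose m hm using hm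
  have hmle : ∀ i, m i ≤ N := by
    intro i
    by_contra hc
    push_neg at hc
    have hclose : ‖u - x (m i)‖ < ε := by
      have e1 : ‖u - x (m i)‖ ≤ ‖u - y (tt i)‖ + ‖y (tt i) - x (m i)‖ := by
        have h0 : u - x (m i) = (u - y (tt i)) + (y (tt i) - x (m i)) := by abel
        rw [h0]; exact norm_add_le _ _
      have e2 : ‖u - y (tt i)‖ = ‖y (tt i) - u‖ := norm_sub_rev _ _
      have e3 := hyu (tt i) (htt0 i) (htt2 i)
      have e4 := hm i
      have e6 := httδ i
      calc ‖u - x (m i)‖ ≤ ‖u - y (tt i)‖ + ‖y (tt i) - x (m i)‖ := e1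
        _ < 2 * tt i + r := by rw [e2]; exact add_lt_add_of_le_of_lt e3 e4
        _ ≤ 2 * δ + ε/2 := by linarith
        _ < ε := by linarith
    exact absurd hclose (not_lt.mpr (hcon (m i) hc))
  have key : ∀ i i' : ℕ, i ≤ N+1 → i < i' → m i = m i' → False := by
    intro i i' hi2 hlt heq
    have hsep' := hsep (tt i) (tt i') (htt0 i') (httmono i i' hlt) (htt2 i)
    have hlow : ρ ≤ ‖y (tt i) - y (tt i')‖ := le_trans (hρle i hi2) hsep'
    have hhigh : ‖y (tt i) - y (tt i')‖ < ρ := by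
      have e1 : ‖y (tt i) - y (tt i')‖ ≤
          ‖y (tt i) - x (m i)‖ + ‖x (m i) - y (tt i')‖ := by
        have h0 : y (tt i) - y (tt i') = (y (tt i) - x (m i)) + (x (m i) - y (tt i')) := by
          abel
        rw [h0]; exact norm_add_le _ _
      have e2 : ‖x (m i) - y (tt i')‖ = ‖y (tt i') - x (m i')‖ := by
        rw [heq, norm_sub_rev]
      calc ‖y (tt i) - y (tt i')‖ ≤ ‖y (tt i) - x (m i)‖ + ‖x (m i) - y (tt i')‖ := e1
        _ < r + r := by rw [e2]; exact add_lt_add (hm i) (hm i')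
        _ ≤ ρ := by linarith
    linarith
  have hmaps : ∀ i ∈ Finset.range (N+2), m i ∈ Finset.range (N+1) :=
    fun i _ => Finset.mem_range.mpr (Nat.lt_succ_of_le (hmle i))
  obtain ⟨i, hi, i', hi', hne, heq⟩ :=
    Finset.exists_ne_map_eq_of_card_lt_of_maps_to (by simp) hmaps
  rcases hne.lt_or_gt with hlt | hlt
  · exact key i i' (by simpa [Nat.lt_succ_iff] using Finset.mem_range.mp hi) hlt heq
  · exact key i' i (by simpa [Nat.lt_succ_iff] using Finset.mem_range.mp hi') hlt heq.symm

theorem dc_eq_range (F : Finset ℕ) (h : ∀ k ∈ F, ∀ l, l < k → l ∈ F) :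
    F = Finset.range F.card := by
  have hsub : F ⊆ Finset.range F.card := by
    intro k hk
    simp only [Finset.mem_range]
    have hss : Finset.range (k+1) ⊆ F := by
      intro l hl
      simp only [Finset.mem_range, Nat.lt_succ_iff] at hl
      rcases lt_or_eq_of_le hl with h' | h'
      · exact h k hk l h'
      · exact h' ▸ hk
    have := Finset.card_le_card hss
    simpa using this
  exact Finset.eq_of_subset_of_card_le hsub (by simp)

set_option maxHeartbeats 2000000 in
/-- For every normalized basic sequence `(w k)` in `X` there
is a subsequence `(e (n k))` of the unit vectors of `E_X` which is equivalent
to `(w k)`. -/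
theorem stmt_7 {X : Type*} [NormedAddCommGroup X] [NormedSpace ℝ X] [CompleteSpace X]
    (x : ℕ → X) (hx1 : ∀ n, ‖x n‖ = 1)
    (hxd : ∀ y : X, ‖y‖ = 1 → ∀ ε : ℝ, 0 < ε → ∃ n, ‖y - x n‖ < ε)
    {E : Type*} [NormedAddCommGroup E] [NormedSpace ℝ E] [CompleteSpace E]
    (ι : (ℕ →₀ ℝ) →ₗ[ℝ] E) (hιd : DenseRange ι)
    (hnorm : ∀ z : ℕ →₀ ℝ,
      ‖ι z‖ = ⨆ m : ℕ, ‖∑ n ∈ Finset.range (m + 1), z n • x n‖)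
    -- `(w k)` is a normalized basic sequence in `X`
    (w : ℕ → X) (hw1 : ∀ k, ‖w k‖ = 1)
    (K : ℝ) (hK : 1 ≤ K)
    (hbasic : ∀ (j : ℕ) (a : ℕ → ℝ) (i : ℕ), i ≤ j →
      ‖∑ k ∈ Finset.range (i + 1), a k • w k‖ ≤
        K * ‖∑ k ∈ Finset.range (j + 1), a k • w k‖) :
    ∃ n : ℕ → ℕ, StrictMono n ∧ ∃ C : ℝ, 1 ≤ C ∧
      ∀ (j : ℕ) (a : ℕ → ℝ),
        C⁻¹ * ‖∑ k ∈ Finset.range (j + 1), a k • w k‖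
            ≤ ‖∑ k ∈ Finset.range (j + 1), a k • ι (Finsupp.single (n k) 1)‖ ∧
        ‖∑ k ∈ Finset.range (j + 1), a k • ι (Finsupp.single (n k) 1)‖
            ≤ C * ‖∑ k ∈ Finset.range (j + 1), a k • w k‖ := by
  have hK0 : (0:ℝ) < K := lt_of_lt_of_le one_pos hK
  -- quantitative independence of consecutive basis vectors
  have hind : ∀ (k : ℕ) (b c : ℝ), |b| ≤ K * ‖b • w k + c • w (k+1)‖ := by
    intro k b c
    set a : ℕ → ℝ := fun m => (if m = k then b else 0) + (if m = k+1 then c else 0) with ha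
    have hsum : ∀ (s : Finset ℕ) (i : ℕ) (d : ℝ),
        ∑ m ∈ s, (if m = i then d else 0) • w m = if i ∈ s then d • w i else 0 := by
      intro s i d
      simp only [ite_smul, zero_smul]
      exact Finset.sum_ite_eq' s i (fun m => d • w m)
    have h1 : ∑ m ∈ Finset.range (k+1), a m • w m = b • w k := by
      simp only [ha, add_smul, Finset.sum_add_distrib, hsum]
      rw [if_pos (Finset.mem_range.mpr (by omega)),
        if_neg (by simp [Finset.mem_range]), add_zero]
    have h2 : ∑ m ∈ Finset.range (k+1+1), a m • w m = b • w k + c • w (k+1) := by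
      simp only [ha, add_smul, Finset.sum_add_distrib, hsum]
      rw [if_pos (Finset.mem_range.mpr (by omega)),
        if_pos (Finset.mem_range.mpr (by omega))]
    have h3 := hbasic (k+1) a k (Nat.le_succ k)
    rw [h1, h2] at h3
    rwa [norm_smul, hw1 k, mul_one, Real.norm_eq_abs] at h3
  -- the perturbation sizes
  have hepspos : ∀ k : ℕ, (0:ℝ) < (8*K)⁻¹ * (1/2)^k := by
    intro k; positivity
  -- choose the subsequence indices
  have hEx : ∀ (k N : ℕ), ∃ n, N < n ∧ ‖w k - x n‖ < (8*K)⁻¹ * (1/2)^k := fun k N =>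
    exists_big_approx x hxd (w k) (w (k+1)) (hw1 k) (hw1 (k+1)) K hK (hind k) N _ (hepspos k)
  choose f hf1 hf2 using hEx
  set n : ℕ → ℕ := fun k => Nat.rec (f 0 0) (fun k ih => f (k+1) ih) k with hndef
  have hnsucc : ∀ k, n (k+1) = f (k+1) (n k) := fun k => rfl
  have hmono : StrictMono n := by
    apply strictMono_nat_of_lt_succ
    intro k
    rw [hnsucc k]
    exact hf1 (k+1) (n k)
  have hnx : ∀ k, ‖w k - x (n k)‖ < (8*K)⁻¹ * (1/2)^k := by
    intro k
    cases k with
    | zero => exact hf2 0 0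
    | succ k' => rw [hnsucc k']; exact hf2 (k'+1) (n k')
  refine ⟨n, hmono, 2*K, by linarith, ?_⟩
  intro j a
  set T := ‖∑ k ∈ Finset.range (j+1), a k • w k‖ with hT
  have hT0 : (0:ℝ) ≤ T := norm_nonneg _
  have hP : ∀ i, i ≤ j → ‖∑ k ∈ Finset.range (i+1), a k • w k‖ ≤ K * T :=
    fun i hi => hbasic j a i hi
  have ha : ∀ k, k ≤ j → |a k| ≤ 2*K*T := by
    intro k hk
    have h0 : |a k| = ‖a k • w k‖ := by
      rw [norm_smul, hw1, mul_one, Real.norm_eq_abs]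
    cases k with
    | zero =>
      have h1 := hP 0 (Nat.zero_le j)
      rw [zero_add, Finset.sum_range_one] at h1
      rw [h0]
      nlinarith
    | succ k' =>
      have h1 := hP (k'+1) hk
      have h2 := hP k' (le_trans (Nat.le_succ k') hk)
      have h3 : a (k'+1) • w (k'+1) =
          (∑ m ∈ Finset.range (k'+1+1), a m • w m) - ∑ m ∈ Finset.range (k'+1), a m • w m := by
        rw [Finset.sum_range_succ]; abel
      have h4 : ‖a (k'+1) • w (k'+1)‖ ≤
          ‖∑ m ∈ Finset.range (k'+1+1), a m • w m‖ + ‖∑ m ∈ Finset.range (k'+1), a m • w m‖ := by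
        rw [h3]; exact norm_sub_le _ _
      rw [h0]
      linarith
  have hgeom : ∀ i : ℕ, ∑ k ∈ Finset.range (i+1), ((8*K)⁻¹ * (1/2:ℝ)^k) ≤ (4*K)⁻¹ := by
    intro i
    rw [← Finset.mul_sum]
    have h1 := sum_geometric_two_le (i+1)
    have h2 : (0:ℝ) ≤ (8*K)⁻¹ := by positivity
    calc (8*K)⁻¹ * ∑ k ∈ Finset.range (i+1), ((1:ℝ)/2)^k
        ≤ (8*K)⁻¹ * 2 := mul_le_mul_of_nonneg_left h1 h2
      _ = (4*K)⁻¹ := by field_simp; ring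
  have hQP : ∀ i, i ≤ j →
      ‖(∑ k ∈ Finset.range (i+1), a k • x (n k)) - ∑ k ∈ Finset.range (i+1), a k • w k‖
        ≤ T/2 := by
    intro i hi
    have h1 : (∑ k ∈ Finset.range (i+1), a k • x (n k)) - ∑ k ∈ Finset.range (i+1), a k • w k
        = ∑ k ∈ Finset.range (i+1), a k • (x (n k) - w k) := by
      simp only [smul_sub, Finset.sum_sub_distrib]
    rw [h1]
    calc ‖∑ k ∈ Finset.range (i+1), a k • (x (n k) - w k)‖
        ≤ ∑ k ∈ Finset.range (i+1), ‖a k • (x (n k) - w k)‖ := norm_sum_le _ _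
      _ ≤ ∑ k ∈ Finset.range (i+1), (2*K*T) * ((8*K)⁻¹ * (1/2)^k) := by
          apply Finset.sum_le_sum
          intro k hk
          rw [norm_smul, Real.norm_eq_abs]
          have hkj : k ≤ j := le_trans (Nat.lt_succ_iff.mp (Finset.mem_range.mp hk)) hi
          have e1 := ha k hkj
          have e2 : ‖x (n k) - w k‖ ≤ (8*K)⁻¹ * (1/2)^k := by
            rw [norm_sub_rev]; exact (hnx k).le
          exact mul_le_mul e1 e2 (norm_nonneg _) (by positivity)
      _ = (2*K*T) * ∑ k ∈ Finset.range (i+1), ((8*K)⁻¹ * (1/2)^k) := by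
          rw [← Finset.mul_sum]
      _ ≤ (2*K*T) * (4*K)⁻¹ := by
          apply mul_le_mul_of_nonneg_left (hgeom i) (by positivity)
      _ = T/2 := by field_simp; ring
  have hQle : ∀ c, c ≤ j+1 → ‖∑ k ∈ Finset.range c, a k • x (n k)‖ ≤ 2*K*T := by
    intro c hc
    cases c with
    | zero => simp; positivity
    | succ i =>
      have hi : i ≤ j := Nat.lt_succ_iff.mp hc
      have h1 := hQP i hi
      have h2 := hP i hi
      have h3 : ‖∑ k ∈ Finset.range (i+1), a k • x (n k)‖ ≤
          ‖∑ k ∈ Finset.range (i+1), a k • w k‖ +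
          ‖(∑ k ∈ Finset.range (i+1), a k • x (n k)) - ∑ k ∈ Finset.range (i+1), a k • w k‖ := by
        simpa using norm_add_le (∑ k ∈ Finset.range (i+1), a k • w k)
          ((∑ k ∈ Finset.range (i+1), a k • x (n k)) - ∑ k ∈ Finset.range (i+1), a k • w k)
      nlinarith
  have hQj : T/2 ≤ ‖∑ k ∈ Finset.range (j+1), a k • x (n k)‖ := by
    have h1 := hQP j le_rfl
    have h2 : T ≤ ‖∑ k ∈ Finset.range (j+1), a k • x (n k)‖ +
        ‖(∑ k ∈ Finset.range (j+1), a k • x (n k)) - ∑ k ∈ Finset.range (j+1), a k • w k‖ := by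
      rw [hT]
      simpa using norm_sub_le (∑ k ∈ Finset.range (j+1), a k • x (n k))
        ((∑ k ∈ Finset.range (j+1), a k • x (n k)) - ∑ k ∈ Finset.range (j+1), a k • w k)
    linarith
  -- the finsupp element
  set z : ℕ →₀ ℝ := ∑ k ∈ Finset.range (j+1), a k • Finsupp.single (n k) (1:ℝ) with hz
  have hιz : ∑ k ∈ Finset.range (j+1), a k • ι (Finsupp.single (n k) 1) = ι z := by
    rw [hz, map_sum]
    simp only [map_smul]
  have hrepr : ∀ m : ℕ, ∑ p ∈ Finset.range (m+1), z p • x p =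
      ∑ k ∈ (Finset.range (j+1)).filter (fun k => n k ∈ Finset.range (m+1)),
        a k • x (n k) := by
    intro m
    have hzp : ∀ p, z p = ∑ k ∈ Finset.range (j+1), (if n k = p then a k else 0) := by
      intro p
      rw [hz, Finsupp.finset_sum_apply]
      apply Finset.sum_congr rfl
      intro k _
      simp [Finsupp.smul_apply, Finsupp.single_apply]
    calc ∑ p ∈ Finset.range (m+1), z p • x p
        = ∑ p ∈ Finset.range (m+1), ∑ k ∈ Finset.range (j+1),
            (if n k = p then a k • x p else 0) := by
          apply Finset.sum_congr rfl
          intro p _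
          rw [hzp p, Finset.sum_smul]
          apply Finset.sum_congr rfl
          intro k _
          simp only [ite_smul, zero_smul]
      _ = ∑ k ∈ Finset.range (j+1), ∑ p ∈ Finset.range (m+1),
            (if n k = p then a k • x p else 0) := Finset.sum_comm
      _ = ∑ k ∈ Finset.range (j+1),
            (if n k ∈ Finset.range (m+1) then a k • x (n k) else 0) := by
          apply Finset.sum_congr rfl
          intro k _
          exact Finset.sum_ite_eq (Finset.range (m+1)) (n k) (fun p => a k • x p)
      _ = ∑ k ∈ (Finset.range (j+1)).filter (fun k => n k ∈ Finset.range (m+1)),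
            a k • x (n k) := (Finset.sum_filter _ _).symm
  have hSm : ∀ m : ℕ, ∃ c, c ≤ j+1 ∧
      ∑ p ∈ Finset.range (m+1), z p • x p = ∑ k ∈ Finset.range c, a k • x (n k) := by
    intro m
    set F := (Finset.range (j+1)).filter (fun k => n k ∈ Finset.range (m+1)) with hF
    have hdc : ∀ k ∈ F, ∀ l, l < k → l ∈ F := by
      intro k hk l hl
      simp only [hF, Finset.mem_filter, Finset.mem_range] at hk ⊢
      exact ⟨lt_trans hl hk.1, lt_of_le_of_lt (Nat.le_of_lt (hmono hl)) hk.2⟩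
    have hFr : F = Finset.range F.card := dc_eq_range F hdc
    refine ⟨F.card, ?_, ?_⟩
    · exact le_trans (Finset.card_filter_le _ _) (le_of_eq (Finset.card_range _))
    · rw [hrepr m]
      exact Finset.sum_congr hFr (fun _ _ => rfl)
  have hbdd : ∀ m : ℕ, ‖∑ p ∈ Finset.range (m+1), z p • x p‖ ≤ 2*K*T := by
    intro m
    obtain ⟨c, hc, he⟩ := hSm m
    rw [he]
    exact hQle c hc
  have hub : ‖ι z‖ ≤ 2*K*T := by
    rw [hnorm z]
    exact ciSup_le hbdd
  have hlbS : ∑ p ∈ Finset.range (n j + 1), z p • x p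
      = ∑ k ∈ Finset.range (j+1), a k • x (n k) := by
    rw [hrepr (n j)]
    congr 1
    apply Finset.filter_true_of_mem
    intro k hk
    simp only [Finset.mem_range] at hk ⊢
    exact Nat.lt_succ_of_le (hmono.monotone (Nat.lt_succ_iff.mp hk))
  have hlb : T/2 ≤ ‖ι z‖ := by
    rw [hnorm z]
    have h1 : ‖∑ p ∈ Finset.range (n j + 1), z p • x p‖ ≤
        ⨆ m : ℕ, ‖∑ p ∈ Finset.range (m+1), z p • x p‖ := by
      apply le_ciSup (f := fun m => ‖∑ p ∈ Finset.range (m+1), z p • x p‖)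
      exact ⟨2*K*T, by rintro y ⟨m, rfl⟩; exact hbdd m⟩
    rw [hlbS] at h1
    linarith
  rw [hιz]
  constructor
  · have h1 : (2*K)⁻¹ ≤ (2:ℝ)⁻¹ := inv_anti₀ (by norm_num) (by linarith)
    have h2 : (2*K)⁻¹ * T ≤ (2:ℝ)⁻¹ * T := mul_le_mul_of_nonneg_right h1 hT0
    have h3 : (2:ℝ)⁻¹ * T = T/2 := by ring
    linarith
  · exact hub
end

section
/- Let Y be a real Banach space and let (y_n)_{n∈ℕ} be a basic sequence in Y (i.e. each y_n ≠ 0 and there exists K ≥ 1 such that for all i ≤ j and all reals a_0, …, a_j, ‖Σ_{n=0}^i a_n y_n‖_Y ≤ K·‖Σ_{n=0}^j a_n y_n‖_Y). Suppose there is a bounded linear operator T from the closed linear span of {y_n : n ∈ ℕ} to X with T(y_n) = x_n for every n. Then there exists a constant C ≥ 1 such that for every j ∈ ℕ and all reals a_0, …, a_j we have ‖Σ_{n=0}^j a_n e_n‖_E ≤ C·‖Σ_{n=0}^j a_n y_n‖_Y; that is, the sequence (e_n) is C-dominated by (y_n). -/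
/-- Among basic sequences `(y n)` such that `y n ↦ x n`
extends to a bounded operator on the closed span, the basis `(e n)` of `E_X`
is minimal with respect to domination: `(e n)` is `C`-dominated by `(y n)` for
some `C ≥ 1`. -/
theorem stmt_10 {X : Type*} [NormedAddCommGroup X] [NormedSpace ℝ X] [CompleteSpace X]
    (x : ℕ → X) (hx1 : ∀ n, ‖x n‖ = 1)
    (hxd : ∀ y : X, ‖y‖ = 1 → ∀ ε : ℝ, 0 < ε → ∃ n, ‖y - x n‖ < ε)
    {E : Type*} [NormedAddCommGroup E] [NormedSpace ℝ E] [CompleteSpace E]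
    (ι : (ℕ →₀ ℝ) →ₗ[ℝ] E) (hιd : DenseRange ι)
    (hnorm : ∀ z : ℕ →₀ ℝ,
      ‖ι z‖ = ⨆ m : ℕ, ‖∑ n ∈ Finset.range (m + 1), z n • x n‖)
    -- `(y n)` is a basic sequence in the Banach space `Y`
    {Y : Type*} [NormedAddCommGroup Y] [NormedSpace ℝ Y] [CompleteSpace Y]
    (y : ℕ → Y) (hy0 : ∀ n, y n ≠ 0)
    (K : ℝ) (hK : 1 ≤ K)
    (hbasic : ∀ (j : ℕ) (a : ℕ → ℝ) (i : ℕ), i ≤ j →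
      ‖∑ n ∈ Finset.range (i + 1), a n • y n‖ ≤
        K * ‖∑ n ∈ Finset.range (j + 1), a n • y n‖)
    -- a bounded operator on the closed span of the `y n` sending `y n` to `x n`
    (T : (Submodule.span ℝ (Set.range y)).topologicalClosure →L[ℝ] X)
    (hT : ∀ n : ℕ, T ⟨y n,
      (Submodule.span ℝ (Set.range y)).le_topologicalClosure
        (Submodule.subset_span (Set.mem_range_self n))⟩ = x n) :
    -- `(e n)` is `C`-dominated by `(y n)`
    ∃ C : ℝ, 1 ≤ C ∧ ∀ (j : ℕ) (a : ℕ → ℝ),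
      ‖∑ n ∈ Finset.range (j + 1), a n • ι (Finsupp.single n 1)‖ ≤
        C * ‖∑ n ∈ Finset.range (j + 1), a n • y n‖ := by
  classical
  set v : ℕ → (Submodule.span ℝ (Set.range y)).topologicalClosure := fun n =>
    ⟨y n, (Submodule.span ℝ (Set.range y)).le_topologicalClosure
      (Submodule.subset_span (Set.mem_range_self n))⟩ with hv
  have hTv : ∀ n, T (v n) = x n := hT
  refine ⟨max 1 (K * ‖T‖), le_max_left _ _, fun j a => ?_⟩
  set z : ℕ →₀ ℝ := ∑ n ∈ Finset.range (j+1), a n • Finsupp.single n 1 with hz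
  have hιz : ι z = ∑ n ∈ Finset.range (j+1), a n • ι (Finsupp.single n 1) := by
    simp only [hz, map_sum, map_smul]
  have hzval : ∀ n, z n = if n < j+1 then a n else 0 := by
    intro n
    rw [hz]
    rw [Finset.sum_apply']
    simp only [Finsupp.smul_apply, Finsupp.single_apply, smul_eq_mul]
    by_cases h : n < j + 1
    · rw [Finset.sum_eq_single n]
      · simp [h]
      · intro b _ hb; simp [hb, Ne.symm hb]
      · intro hn; exact absurd (Finset.mem_range.mpr h) hn
    · rw [if_neg h, Finset.sum_eq_zero]
      intro b hb
      have hb' : b ≠ n := by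
        intro e; exact h (e ▸ Finset.mem_range.mp hb)
      simp [hb']
  rw [← hιz, hnorm]
  apply ciSup_le
  intro m
  have key : ∑ n ∈ Finset.range (m+1), z n • x n
      = ∑ n ∈ Finset.range (min m j + 1), a n • x n := by
    have hfil : (Finset.range (m+1)).filter (· < j+1) = Finset.range (min m j + 1) := by
      ext n; simp
    calc ∑ n ∈ Finset.range (m+1), z n • x n
        = ∑ n ∈ Finset.range (m+1), (if n < j+1 then a n • x n else 0) := by
          refine Finset.sum_congr rfl fun n _ => ?_
          rw [hzval n]; split <;> simp
      _ = ∑ n ∈ (Finset.range (m+1)).filter (· < j+1), a n • x n :=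
          (Finset.sum_filter _ _).symm
      _ = ∑ n ∈ Finset.range (min m j + 1), a n • x n := by rw [hfil]
  rw [key]
  have hTsum : ∑ n ∈ Finset.range (min m j + 1), a n • x n
      = T (∑ n ∈ Finset.range (min m j + 1), a n • v n) := by
    rw [map_sum]
    refine Finset.sum_congr rfl fun n _ => ?_
    rw [map_smul, hTv n]
  rw [hTsum]
  have hcoe : ‖∑ n ∈ Finset.range (min m j + 1), a n • v n‖
      = ‖∑ n ∈ Finset.range (min m j + 1), a n • y n‖ := by
    rw [← Submodule.norm_coe]
    congr 1
    push_cast [hv]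
    rfl
  calc ‖T (∑ n ∈ Finset.range (min m j + 1), a n • v n)‖
      ≤ ‖T‖ * ‖∑ n ∈ Finset.range (min m j + 1), a n • v n‖ := T.le_opNorm _
    _ = ‖T‖ * ‖∑ n ∈ Finset.range (min m j + 1), a n • y n‖ := by rw [hcoe]
    _ ≤ ‖T‖ * (K * ‖∑ n ∈ Finset.range (j + 1), a n • y n‖) := by
        have := hbasic j a (min m j) (min_le_right m j)
        exact mul_le_mul_of_nonneg_left this (norm_nonneg T)
    _ = (K * ‖T‖) * ‖∑ n ∈ Finset.range (j + 1), a n • y n‖ := by ring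
    _ ≤ max 1 (K * ‖T‖) * ‖∑ n ∈ Finset.range (j + 1), a n • y n‖ :=
        mul_le_mul_of_nonneg_right (le_max_right _ _) (norm_nonneg _)
end

section
/- Let X be a real Banach space and let (x_t)_{t∈2^{<ℕ}} be a sequence in X which is topologically equivalent to the basis of James tree. Then for every dyadic subtree D = {d_t : t ∈ 2^{<ℕ}} of 2^{<ℕ}, the sequence (x_{d_t})_{t∈2^{<ℕ}} is topologically equivalent to the basis of James tree. -/
open Filter

/-- `s` is a strict initial segment (proper prefix) of `t` in the dyadic tree
`2^{<ℕ}` (realized as `List Bool`). -/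
def StrictPrefix (s t : List Bool) : Prop := s <+: t ∧ s ≠ t

/-- For incomparable nodes: `s ≺ t` iff `(s ∧ t)⌢0 ⊑ s` and `(s ∧ t)⌢1 ⊑ t`
where `s ∧ t` is the longest common initial segment of `s` and `t`
(equivalently, some common prefix `w` satisfies `w⌢0 ⊑ s` and `w⌢1 ⊑ t`). -/
def PrecRel (s t : List Bool) : Prop :=
  ∃ w : List Bool, (w ++ [false]) <+: s ∧ (w ++ [true]) <+: t

/-- A dyadic subtree of `2^{<ℕ}`: an injective indexing `d : 2^{<ℕ} → 2^{<ℕ}`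
preserving and reflecting both `⊏` and `≺`. -/
def IsDyadicSubtree (d : List Bool → List Bool) : Prop :=
  Function.Injective d ∧
  (∀ t₀ t₁ : List Bool, StrictPrefix t₀ t₁ ↔ StrictPrefix (d t₀) (d t₁)) ∧
  (∀ t₀ t₁ : List Bool, PrecRel t₀ t₁ ↔ PrecRel (d t₀) (d t₁))

/-- A sequence `(x t)_{t ∈ 2^{<ℕ}}` in a Banach space `X` is topologically
equivalent to the basis of James tree: it is semi-normalized; for every
infinite antichain (equivalently, every injective enumeration of pairwise
incomparable nodes) the corresponding sequence is weakly null; and for every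
branch `σ ∈ 2^ℕ` the sequence `(x (σ|n))` is weak* convergent in the bidual to
an element `L σ` outside (the canonical image of) `X`, with distinct limits
for distinct branches. -/
def TopEquivJamesTree {X : Type*} [NormedAddCommGroup X] [NormedSpace ℝ X]
    (x : List Bool → X) : Prop :=
  (∃ c C : ℝ, 0 < c ∧ c ≤ C ∧ ∀ t : List Bool, c ≤ ‖x t‖ ∧ ‖x t‖ ≤ C) ∧
  (∀ e : ℕ → List Bool, Function.Injective e →
    (∀ i j : ℕ, i ≠ j → ¬ (e i <+: e j) ∧ ¬ (e j <+: e i)) →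
    ∀ f : X →L[ℝ] ℝ, Tendsto (fun n => f (x (e n))) atTop (nhds 0)) ∧
  (∃ L : (ℕ → Bool) → StrongDual ℝ (StrongDual ℝ X),
    (∀ (σ : ℕ → Bool) (f : StrongDual ℝ X),
      Tendsto (fun n => f (x (List.ofFn fun i : Fin n => σ i))) atTop (nhds (L σ f))) ∧
    (∀ σ : ℕ → Bool, L σ ∉ Set.range (NormedSpace.inclusionInDoubleDual ℝ X)) ∧
    (∀ σ τ : ℕ → Bool, σ ≠ τ → L σ ≠ L τ))

/-! A dyadic subtree carries each branch `σ` onto the nodes of a single branch `T σ` of `2^{<ℕ}`,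
along a strictly increasing sequence of levels, and distinct branches go to distinct branches
because `d` reflects comparability. So the weak* limits along the new branches are the old limits
`L (T σ)`, and antichains are sent to antichains. -/

section BranchPrefix

variable {α : Type*}

def branchPrefix (σ : ℕ → α) (n : ℕ) : List α := List.ofFn fun i : Fin n => σ i

@[simp]
lemma length_branchPrefix (σ : ℕ → α) (n : ℕ) : (branchPrefix σ n).length = n :=
  List.length_ofFn

lemma branchPrefix_prefix_of_le (σ : ℕ → α) {m n : ℕ} (h : m ≤ n) :
    branchPrefix σ m <+: branchPrefix σ n := by
  rw [List.prefix_iff_eq_take]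
  apply List.ext_getElem
  · simp [h]
  · intro i _ _
    simp [branchPrefix]

lemma branchPrefix_prefix_or_prefix (σ : ℕ → α) (m n : ℕ) :
    branchPrefix σ m <+: branchPrefix σ n ∨ branchPrefix σ n <+: branchPrefix σ m :=
  (le_total m n).imp (branchPrefix_prefix_of_le σ) (branchPrefix_prefix_of_le σ)

lemma eq_of_branchPrefix_eq {σ τ : ℕ → α} (h : ∀ n, branchPrefix σ n = branchPrefix τ n) :
    σ = τ :=
  funext fun n => congrFun (List.ofFn_injective (h (n + 1))) (Fin.last n)

end BranchPrefix

lemma StrictPrefix.length_lt {s t : List Bool} (h : StrictPrefix s t) : s.length < t.length :=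
  h.1.length_le.lt_of_ne fun hlen => h.2 (h.1.eq_of_length hlen)

lemma strictPrefix_branchPrefix_succ (σ : ℕ → Bool) (n : ℕ) :
    StrictPrefix (branchPrefix σ n) (branchPrefix σ (n + 1)) :=
  ⟨branchPrefix_prefix_of_le σ n.le_succ, fun h => by simpa using congrArg List.length h⟩

lemma exists_branchPrefix_of_strictPrefix_chain (y : ℕ → List Bool)
    (hy : ∀ n, StrictPrefix (y n) (y (n + 1))) :
    ∃ τ : ℕ → Bool, ∀ n, y n = branchPrefix τ (y n).length := by
  have hchain : ∀ m n, m ≤ n → y m <+: y n := fun m n hmn => by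
    induction n, hmn using Nat.le_induction with
    | base => exact List.prefix_rfl
    | succ n _ ih => exact ih.trans (hy n).1
  have hlen : StrictMono fun n => (y n).length :=
    strictMono_nat_of_lt_succ fun n => (hy n).length_lt
  have hlt : ∀ k, k < (y (k + 1)).length := fun k => k.lt_succ_self.trans_le hlen.le_apply
  refine ⟨fun k => (y (k + 1))[k]'(hlt k), fun n => List.ext_getElem (by simp) fun i h _ => ?_⟩
  simp only [branchPrefix, List.getElem_ofFn]
  rcases le_total n (i + 1) with hni | hin
  · exact (hchain n (i + 1) hni).getElem h
  · exact ((hchain (i + 1) n hin).getElem (hlt i)).symm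

namespace IsDyadicSubtree

variable {d : List Bool → List Bool}

lemma not_prefix (hd : IsDyadicSubtree d) {a b : List Bool} (hne : a ≠ b) (hab : ¬ a <+: b) :
    ¬ d a <+: d b :=
  fun h => hab ((hd.2.1 a b).mpr ⟨h, fun he => hne (hd.1 he)⟩).1

lemma eq_of_prefix_of_length_eq (hd : IsDyadicSubtree d) {a b : List Bool}
    (hlen : a.length = b.length) (h : d a <+: d b) : a = b := by
  by_contra hne
  exact hne (((hd.2.1 a b).mpr ⟨h, fun he => hne (hd.1 he)⟩).1.eq_of_length hlen)

lemma pairwise_incomparable_comp (hd : IsDyadicSubtree d) {e : ℕ → List Bool}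
    (he : Function.Injective e)
    (hanti : ∀ i j : ℕ, i ≠ j → ¬ (e i <+: e j) ∧ ¬ (e j <+: e i)) :
    ∀ i j : ℕ, i ≠ j → ¬ (d (e i) <+: d (e j)) ∧ ¬ (d (e j) <+: d (e i)) := fun i j hij =>
  ⟨hd.not_prefix (he.ne hij) (hanti i j hij).1,
    hd.not_prefix (he.ne hij.symm) (hanti i j hij).2⟩

lemma strictMono_length_branchPrefix (hd : IsDyadicSubtree d) (σ : ℕ → Bool) :
    StrictMono fun n => (d (branchPrefix σ n)).length :=
  strictMono_nat_of_lt_succ fun n =>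
    ((hd.2.1 _ _).mp (strictPrefix_branchPrefix_succ σ n)).length_lt

lemma exists_branch_image (hd : IsDyadicSubtree d) (σ : ℕ → Bool) :
    ∃ τ : ℕ → Bool, ∀ n, d (branchPrefix σ n) = branchPrefix τ (d (branchPrefix σ n)).length :=
  exists_branchPrefix_of_strictPrefix_chain _ fun n =>
    (hd.2.1 _ _).mp (strictPrefix_branchPrefix_succ σ n)

lemma injective_of_branch_image (hd : IsDyadicSubtree d) {T : (ℕ → Bool) → ℕ → Bool}
    (hT : ∀ σ n, d (branchPrefix σ n) = branchPrefix (T σ) (d (branchPrefix σ n)).length) :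
    Function.Injective T := by
  intro σ τ hστ
  refine eq_of_branchPrefix_eq fun n => ?_
  have hlen : (branchPrefix σ n).length = (branchPrefix τ n).length := by simp
  rcases branchPrefix_prefix_or_prefix (T σ) (d (branchPrefix σ n)).length
      (d (branchPrefix τ n)).length with h | h
  · rw [← hT, hστ, ← hT] at h
    exact hd.eq_of_prefix_of_length_eq hlen h
  · rw [← hT, hστ, ← hT] at h
    exact (hd.eq_of_prefix_of_length_eq hlen.symm h).symm

end IsDyadicSubtree

theorem stmt_11_general {X : Type*} [NormedAddCommGroup X] [NormedSpace ℝ X]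
    (x : List Bool → X) (hx : TopEquivJamesTree x)
    (d : List Bool → List Bool) (hd : IsDyadicSubtree d) :
    TopEquivJamesTree (fun t => x (d t)) := by
  obtain ⟨⟨c, C, hc, hcC, hbound⟩, hweak, L, hlim, hnotmem, hinj⟩ := hx
  choose T hT using hd.exists_branch_image
  refine ⟨⟨c, C, hc, hcC, fun t => hbound (d t)⟩,
    fun e he hanti => hweak (d ∘ e) (hd.1.comp he) (hd.pairwise_incomparable_comp he hanti),
    fun σ => L (T σ), fun σ f => ?_, fun σ => hnotmem (T σ),
    fun σ τ hστ => hinj _ _ ((hd.injective_of_branch_image hT).ne hστ)⟩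
  exact ((hlim (T σ) f).comp (hd.strictMono_length_branchPrefix σ).tendsto_atTop).congr
    fun n => congrArg (fun l => f (x l)) (hT σ n).symm

/-- If `(x t)` is topologically equivalent to the basis of
James tree, then so is its restriction `(x (d t))` to any dyadic subtree. -/
theorem stmt_11 {X : Type*} [NormedAddCommGroup X] [NormedSpace ℝ X] [CompleteSpace X]
    (x : List Bool → X) (hx : TopEquivJamesTree x)
    (d : List Bool → List Bool) (hd : IsDyadicSubtree d) :
    TopEquivJamesTree (fun t => x (d t)) :=
  stmt_11_general x hx d hd
end
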